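/- arXiv:2510.07641 — 4 statements merged into one kernel-verified Lean document; each statement's English description precedes it below -/
import Mathlib

section
/- For every term t such that the evaluation t̂ is an ungrounded sentence, the sentence A[t] is not a theorem of the formal system ATM. -/
namespace ATM

/-- Terms of ATM: built from ⊥̇ and constants L₁, L₂, … by the dotted
connectives ∧̇, ∨̇, →̇ and the dotted predicates Ȧ[·], Ṫ[·], Ṁ[·]. -/
inductive Term : Type
  | bot  : Term
  | L    : ℕ → Term
  | and  : Term → Term → Term
  | or   : Term → Term → Term
  | imp  : Term → Term → Term
  | A    : Term → Term
  | T    : Term → Term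
  | M    : Term → Term

/-- Sentences of ATM: built from ⊥, A[t], T[t], M[t] by ∧, ∨, →. -/
inductive Sentence : Type
  | bot  : Sentence
  | A    : Term → Sentence
  | T    : Term → Sentence
  | M    : Term → Sentence
  | and  : Sentence → Sentence → Sentence
  | or   : Sentence → Sentence → Sentence
  | imp  : Sentence → Sentence → Sentence

/-- ¬̇t abbreviates t →̇ ⊥̇. -/
def Term.neg (t : Term) : Term := Term.imp t Term.bot

/-- s ↔̇ t abbreviates (s →̇ t) ∧̇ (t →̇ s). -/
def Term.iff (s t : Term) : Term := Term.and (Term.imp s t) (Term.imp t s)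

/-- ¬φ abbreviates φ → ⊥. -/
def Sentence.neg (φ : Sentence) : Sentence := Sentence.imp φ Sentence.bot

/-- φ ↔ ψ abbreviates (φ → ψ) ∧ (ψ → φ). -/
def Sentence.iff (φ ψ : Sentence) : Sentence :=
  Sentence.and (Sentence.imp φ ψ) (Sentence.imp ψ φ)

/-- The canonical term φ̇ of a sentence φ, obtained by dotting every symbol. -/
def Sentence.dot : Sentence → Term
  | Sentence.bot     => Term.bot
  | Sentence.A t     => Term.A t
  | Sentence.T t     => Term.T t
  | Sentence.M t     => Term.M t
  | Sentence.and φ ψ => Term.and φ.dot ψ.dot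
  | Sentence.or φ ψ  => Term.or φ.dot ψ.dot
  | Sentence.imp φ ψ => Term.imp φ.dot ψ.dot

/-- Evaluation t̂ of a term t to a sentence, relative to an assignment
θ of a sentence θᵢ to each constant Lᵢ.  (The θᵢ may be chosen in any
manner; the theorems below hypothesize θ₁ = ¬T[L₁] and θ₂ = ¬A[L₂].) -/
def Term.eval (θ : ℕ → Sentence) : Term → Sentence
  | Term.bot     => Sentence.bot
  | Term.L i     => θ i
  | Term.A t     => Sentence.A t
  | Term.T t     => Sentence.T t
  | Term.M t     => Sentence.M t
  | Term.and s t => Sentence.and (s.eval θ) (t.eval θ)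
  | Term.or s t  => Sentence.or (s.eval θ) (t.eval θ)
  | Term.imp s t => Sentence.imp (s.eval θ) (t.eval θ)

/-- Grounded sentences: the smallest set of sentences containing ⊥, all A[t]
and all M[t], closed under ∧, ∨, →, and containing T[t] whenever t̂ is in
the set. -/
inductive Grounded (θ : ℕ → Sentence) : Sentence → Prop
  | bot : Grounded θ Sentence.bot
  | A (t : Term) : Grounded θ (Sentence.A t)
  | M (t : Term) : Grounded θ (Sentence.M t)
  | and {φ ψ : Sentence} : Grounded θ φ → Grounded θ ψ → Grounded θ (Sentence.and φ ψ)
  | or {φ ψ : Sentence} : Grounded θ φ → Grounded θ ψ → Grounded θ (Sentence.or φ ψ)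
  | imp {φ ψ : Sentence} : Grounded θ φ → Grounded θ ψ → Grounded θ (Sentence.imp φ ψ)
  | T {t : Term} : Grounded θ (t.eval θ) → Grounded θ (Sentence.T t)

/-- `HilbertAxT s t u a` : the term `a` is the instance `Ȧ(s,t,u)` at the
terms `s`, `t`, `u` of one of the axiom schemes `A` of a fixed standard
Hilbert-style axiomatization of intuitionistic propositional logic. -/
inductive HilbertAxT : Term → Term → Term → Term → Prop
  | imp1 (s t u : Term) : HilbertAxT s t u (Term.imp s (Term.imp t s))
  | imp2 (s t u : Term) : HilbertAxT s t u
      (Term.imp (Term.imp s (Term.imp t u))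
        (Term.imp (Term.imp s t) (Term.imp s u)))
  | andE1 (s t u : Term) : HilbertAxT s t u (Term.imp (Term.and s t) s)
  | andE2 (s t u : Term) : HilbertAxT s t u (Term.imp (Term.and s t) t)
  | andI (s t u : Term) : HilbertAxT s t u (Term.imp s (Term.imp t (Term.and s t)))
  | orI1 (s t u : Term) : HilbertAxT s t u (Term.imp s (Term.or s t))
  | orI2 (s t u : Term) : HilbertAxT s t u (Term.imp t (Term.or s t))
  | orE (s t u : Term) : HilbertAxT s t u
      (Term.imp (Term.imp s u)
        (Term.imp (Term.imp t u) (Term.imp (Term.or s t) u)))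
  | exfalso (s t u : Term) : HilbertAxT s t u (Term.imp Term.bot s)

/-- Theorems of ATM: the axioms (logical axioms and nonlogical schemes
(1)–(9)) closed under the three deduction rules (conjunction, modus
ponens, release). -/
inductive Thm (θ : ℕ → Sentence) : Sentence → Prop
  -- logical axioms: (M[s] ∧ M[t] ∧ M[u]) → A[Ȧ(s,t,u)]
  | logical {s t u a : Term} (h : HilbertAxT s t u a) :
      Thm θ (Sentence.imp
        (Sentence.and (Sentence.and (Sentence.M s) (Sentence.M t)) (Sentence.M u))
        (Sentence.A a))
  -- (1) M[t] for t̂ grounded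
  | ax1 {t : Term} (h : Grounded θ (t.eval θ)) : Thm θ (Sentence.M t)
  -- (2) (M[s] ∧ M[t]) ↔ M[s ∧̇ t] ↔ M[s ∨̇ t] ↔ M[s →̇ t]
  | ax2and (s t : Term) :
      Thm θ (Sentence.iff (Sentence.and (Sentence.M s) (Sentence.M t))
        (Sentence.M (Term.and s t)))
  | ax2or (s t : Term) :
      Thm θ (Sentence.iff (Sentence.and (Sentence.M s) (Sentence.M t))
        (Sentence.M (Term.or s t)))
  | ax2imp (s t : Term) :
      Thm θ (Sentence.iff (Sentence.and (Sentence.M s) (Sentence.M t))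
        (Sentence.M (Term.imp s t)))
  -- (3) A[t] → M[t]
  | ax3 (t : Term) : Thm θ (Sentence.imp (Sentence.A t) (Sentence.M t))
  -- (4) (A[s] ∧ A[t]) → A[s ∧̇ t]
  | ax4 (s t : Term) :
      Thm θ (Sentence.imp (Sentence.and (Sentence.A s) (Sentence.A t))
        (Sentence.A (Term.and s t)))
  -- (5) (A[s] ∧ A[s →̇ t]) → A[t]
  | ax5 (s t : Term) :
      Thm θ (Sentence.imp (Sentence.and (Sentence.A s) (Sentence.A (Term.imp s t)))
        (Sentence.A t))
  -- (6) M[t] → A[t →̇ Ȧ[t]]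
  | ax6 (t : Term) :
      Thm θ (Sentence.imp (Sentence.M t) (Sentence.A (Term.imp t (Term.A t))))
  -- (7) M[t] → A[t ↔̇ Ṫ[t]]
  | ax7 (t : Term) :
      Thm θ (Sentence.imp (Sentence.M t) (Sentence.A (Term.iff t (Term.T t))))
  -- (8) ¬M[t] → A[¬̇Ṫ[t]]
  | ax8 (t : Term) :
      Thm θ (Sentence.imp (Sentence.neg (Sentence.M t))
        (Sentence.A (Term.neg (Term.T t))))
  -- (9) M[t] → A[t ↔̇ t'] whenever t̂ = t̂'
  | ax9 {t t' : Term} (h : t.eval θ = t'.eval θ) :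
      Thm θ (Sentence.imp (Sentence.M t) (Sentence.A (Term.iff t t')))
  -- deduction rules
  | conj {φ ψ : Sentence} : Thm θ φ → Thm θ ψ → Thm θ (Sentence.and φ ψ)
  | mp {φ ψ : Sentence} : Thm θ φ → Thm θ (Sentence.imp φ ψ) → Thm θ ψ
  | release {t : Term} : Thm θ (Sentence.A t) → Thm θ (t.eval θ)

/-- θ₁ is the classical liar sentence ¬T[L₁]. -/
def liar1 : Sentence := Sentence.neg (Sentence.T (Term.L 1))

/-- θ₂ is the assertible liar sentence ¬A[L₂]. -/
def liar2 : Sentence := Sentence.neg (Sentence.A (Term.L 2))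


/- ========= Auxiliary development for the soundness invariant ========= -/

section Soundness

attribute [local instance] Classical.propDecidable

/-- Inversion for `Grounded` on conjunctions. -/
theorem Grounded.and_inv {θ : ℕ → Sentence} {φ ψ : Sentence}
    (h : Grounded θ (Sentence.and φ ψ)) : Grounded θ φ ∧ Grounded θ ψ := by
  cases h with | and h1 h2 => exact ⟨h1, h2⟩

theorem Grounded.or_inv {θ : ℕ → Sentence} {φ ψ : Sentence}
    (h : Grounded θ (Sentence.or φ ψ)) : Grounded θ φ ∧ Grounded θ ψ := by
  cases h with | or h1 h2 => exact ⟨h1, h2⟩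

theorem Grounded.imp_inv {θ : ℕ → Sentence} {φ ψ : Sentence}
    (h : Grounded θ (Sentence.imp φ ψ)) : Grounded θ φ ∧ Grounded θ ψ := by
  cases h with | imp h1 h2 => exact ⟨h1, h2⟩

theorem Grounded.T_inv {θ : ℕ → Sentence} {t : Term}
    (h : Grounded θ (Sentence.T t)) : Grounded θ (t.eval θ) := by
  cases h with | T h1 => exact h1

/-- Depth-indexed groundedness. -/
inductive GN (θ : ℕ → Sentence) : ℕ → Sentence → Prop
  | bot (n) : GN θ (n+1) Sentence.bot
  | A (n t) : GN θ (n+1) (Sentence.A t)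
  | M (n t) : GN θ (n+1) (Sentence.M t)
  | and {n φ ψ} : GN θ n φ → GN θ n ψ → GN θ (n+1) (Sentence.and φ ψ)
  | or {n φ ψ} : GN θ n φ → GN θ n ψ → GN θ (n+1) (Sentence.or φ ψ)
  | imp {n φ ψ} : GN θ n φ → GN θ n ψ → GN θ (n+1) (Sentence.imp φ ψ)
  | T {n t} : GN θ n (t.eval θ) → GN θ (n+1) (Sentence.T t)

theorem GN.mono {θ : ℕ → Sentence} {n m : ℕ} {φ : Sentence}
    (h : GN θ n φ) (hm : n ≤ m) : GN θ m φ := by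
  induction h generalizing m with
  | bot n => obtain ⟨k, rfl⟩ : ∃ k, m = k + 1 := ⟨m - 1, by omega⟩; exact .bot k
  | A n t => obtain ⟨k, rfl⟩ : ∃ k, m = k + 1 := ⟨m - 1, by omega⟩; exact .A k t
  | M n t => obtain ⟨k, rfl⟩ : ∃ k, m = k + 1 := ⟨m - 1, by omega⟩; exact .M k t
  | and h1 h2 ih1 ih2 =>
      obtain ⟨k, rfl⟩ : ∃ k, m = k + 1 := ⟨m - 1, by omega⟩
      exact .and (ih1 (by omega)) (ih2 (by omega))
  | or h1 h2 ih1 ih2 =>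
      obtain ⟨k, rfl⟩ : ∃ k, m = k + 1 := ⟨m - 1, by omega⟩
      exact .or (ih1 (by omega)) (ih2 (by omega))
  | imp h1 h2 ih1 ih2 =>
      obtain ⟨k, rfl⟩ : ∃ k, m = k + 1 := ⟨m - 1, by omega⟩
      exact .imp (ih1 (by omega)) (ih2 (by omega))
  | T h1 ih =>
      obtain ⟨k, rfl⟩ : ∃ k, m = k + 1 := ⟨m - 1, by omega⟩
      exact .T (ih (by omega))

theorem grounded_iff_gn {θ : ℕ → Sentence} {φ : Sentence} :
    Grounded θ φ ↔ ∃ n, GN θ n φ := by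
  constructor
  · intro h
    induction h with
    | bot => exact ⟨1, .bot 0⟩
    | A t => exact ⟨1, .A 0 t⟩
    | M t => exact ⟨1, .M 0 t⟩
    | and h1 h2 ih1 ih2 =>
        obtain ⟨n1, g1⟩ := ih1; obtain ⟨n2, g2⟩ := ih2
        exact ⟨max n1 n2 + 1, .and (g1.mono (le_max_left _ _)) (g2.mono (le_max_right _ _))⟩
    | or h1 h2 ih1 ih2 =>
        obtain ⟨n1, g1⟩ := ih1; obtain ⟨n2, g2⟩ := ih2
        exact ⟨max n1 n2 + 1, .or (g1.mono (le_max_left _ _)) (g2.mono (le_max_right _ _))⟩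
    | imp h1 h2 ih1 ih2 =>
        obtain ⟨n1, g1⟩ := ih1; obtain ⟨n2, g2⟩ := ih2
        exact ⟨max n1 n2 + 1, .imp (g1.mono (le_max_left _ _)) (g2.mono (le_max_right _ _))⟩
    | T h ih => obtain ⟨n, g⟩ := ih; exact ⟨n + 1, .T g⟩
  · rintro ⟨n, h⟩
    induction h with
    | bot => exact .bot
    | A _ t => exact .A t
    | M _ t => exact .M t
    | and _ _ ih1 ih2 => exact .and ih1 ih2
    | or _ _ ih1 ih2 => exact .or ih1 ih2
    | imp _ _ ih1 ih2 => exact .imp ih1 ih2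
    | T _ ih => exact .T ih

/-- Grounding rank (0 for ungrounded sentences). -/
noncomputable def grk (θ : ℕ → Sentence) (φ : Sentence) : ℕ :=
  if h : ∃ n, GN θ n φ then Nat.find h else 0

/-- 0 for grounded sentences, 1 for ungrounded ones. -/
noncomputable def flg (θ : ℕ → Sentence) (φ : Sentence) : ℕ :=
  if Grounded θ φ then 0 else 1

theorem grk_le {θ : ℕ → Sentence} {φ : Sentence} {n : ℕ} (h : GN θ n φ) :
    grk θ φ ≤ n := by
  unfold grk; rw [dif_pos ⟨n, h⟩]; exact Nat.find_le h

theorem grk_spec {θ : ℕ → Sentence} {φ : Sentence} (h : Grounded θ φ) :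
    GN θ (grk θ φ) φ := by
  have h' := grounded_iff_gn.mp h
  unfold grk; rw [dif_pos h']; exact Nat.find_spec h'

theorem grk_lt_T {θ : ℕ → Sentence} {t : Term} (h : Grounded θ (t.eval θ)) :
    grk θ (t.eval θ) < grk θ (Sentence.T t) := by
  have hs := grk_spec (Grounded.T h)
  generalize hk : grk θ (Sentence.T t) = k at hs ⊢
  cases hs with
  | T h1 => exact lt_of_le_of_lt (grk_le h1) (by omega)

theorem grk_lt_and {θ : ℕ → Sentence} {φ ψ : Sentence} (h : Grounded θ (Sentence.and φ ψ)) :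
    grk θ φ < grk θ (Sentence.and φ ψ) ∧ grk θ ψ < grk θ (Sentence.and φ ψ) := by
  have hs := grk_spec h
  generalize hk : grk θ (Sentence.and φ ψ) = k at hs ⊢
  cases hs with
  | and h1 h2 => exact ⟨lt_of_le_of_lt (grk_le h1) (by omega), lt_of_le_of_lt (grk_le h2) (by omega)⟩

theorem grk_lt_or {θ : ℕ → Sentence} {φ ψ : Sentence} (h : Grounded θ (Sentence.or φ ψ)) :
    grk θ φ < grk θ (Sentence.or φ ψ) ∧ grk θ ψ < grk θ (Sentence.or φ ψ) := by
  have hs := grk_spec h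
  generalize hk : grk θ (Sentence.or φ ψ) = k at hs ⊢
  cases hs with
  | or h1 h2 => exact ⟨lt_of_le_of_lt (grk_le h1) (by omega), lt_of_le_of_lt (grk_le h2) (by omega)⟩

theorem grk_lt_imp {θ : ℕ → Sentence} {φ ψ : Sentence} (h : Grounded θ (Sentence.imp φ ψ)) :
    grk θ φ < grk θ (Sentence.imp φ ψ) ∧ grk θ ψ < grk θ (Sentence.imp φ ψ) := by
  have hs := grk_spec h
  generalize hk : grk θ (Sentence.imp φ ψ) = k at hs ⊢
  cases hs with
  | imp h1 h2 => exact ⟨lt_of_le_of_lt (grk_le h1) (by omega), lt_of_le_of_lt (grk_le h2) (by omega)⟩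

theorem grk_ungrounded {θ : ℕ → Sentence} {φ : Sentence} (h : ¬ Grounded θ φ) :
    grk θ φ = 0 := by
  unfold grk
  rw [dif_neg]
  intro hx
  exact h (grounded_iff_gn.mpr hx)

end Soundness

section Limit

/-- Auxiliary one-step valuation at the "limit world": all `A`- and `M`-atoms
are true, `T`-atoms unfold via `prev`. -/
def Waux (θ : ℕ → Sentence) (prev : Sentence → Prop) : Sentence → Prop
  | Sentence.bot => False
  | Sentence.A _ => True
  | Sentence.M _ => True
  | Sentence.T t => prev (t.eval θ)
  | Sentence.and φ ψ => Waux θ prev φ ∧ Waux θ prev ψ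
  | Sentence.or φ ψ => Waux θ prev φ ∨ Waux θ prev ψ
  | Sentence.imp φ ψ => Waux θ prev φ → Waux θ prev ψ

/-- Fuel-indexed classical valuation at the limit world. -/
def W (θ : ℕ → Sentence) : ℕ → Sentence → Prop
  | 0 => Waux θ fun _ => True
  | n+1 => Waux θ (W θ n)

theorem W_bot {θ : ℕ → Sentence} {n : ℕ} : W θ n Sentence.bot ↔ False := by
  cases n <;> exact Iff.rfl

theorem W_A {θ : ℕ → Sentence} {n : ℕ} {t : Term} : W θ n (Sentence.A t) := by
  cases n <;> trivial

theorem W_M {θ : ℕ → Sentence} {n : ℕ} {t : Term} : W θ n (Sentence.M t) := by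
  cases n <;> trivial

theorem W_T {θ : ℕ → Sentence} {n : ℕ} {t : Term} :
    W θ (n+1) (Sentence.T t) ↔ W θ n (t.eval θ) := Iff.rfl

theorem W_and {θ : ℕ → Sentence} {n : ℕ} {φ ψ : Sentence} :
    W θ n (Sentence.and φ ψ) ↔ W θ n φ ∧ W θ n ψ := by
  cases n <;> exact Iff.rfl

theorem W_or {θ : ℕ → Sentence} {n : ℕ} {φ ψ : Sentence} :
    W θ n (Sentence.or φ ψ) ↔ W θ n φ ∨ W θ n ψ := by
  cases n <;> exact Iff.rfl

theorem W_imp {θ : ℕ → Sentence} {n : ℕ} {φ ψ : Sentence} :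
    W θ n (Sentence.imp φ ψ) ↔ (W θ n φ → W θ n ψ) := by
  cases n <;> exact Iff.rfl

/-- Stable (limit) truth at the limit world. -/
def SV (θ : ℕ → Sentence) (φ : Sentence) : Prop := ∃ N, ∀ n, N ≤ n → W θ n φ

theorem svI {θ : ℕ → Sentence} {φ : Sentence} (h : ∀ n, W θ n φ) : SV θ φ :=
  ⟨0, fun n _ => h n⟩

theorem sv_mp {θ : ℕ → Sentence} {φ ψ : Sentence} (h1 : SV θ φ)
    (h2 : SV θ (Sentence.imp φ ψ)) : SV θ ψ := by
  obtain ⟨N1, hh1⟩ := h1; obtain ⟨N2, hh2⟩ := h2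
  exact ⟨max N1 N2, fun n hn =>
    (W_imp.mp (hh2 n (le_trans (le_max_right _ _) hn))) (hh1 n (le_trans (le_max_left _ _) hn))⟩

theorem sv_and {θ : ℕ → Sentence} {φ ψ : Sentence} (h1 : SV θ φ) (h2 : SV θ ψ) :
    SV θ (Sentence.and φ ψ) := by
  obtain ⟨N1, hh1⟩ := h1; obtain ⟨N2, hh2⟩ := h2
  exact ⟨max N1 N2, fun n hn => W_and.mpr
    ⟨hh1 n (le_trans (le_max_left _ _) hn), hh2 n (le_trans (le_max_right _ _) hn)⟩⟩

/-- Grounded sentences have a stable value at the limit world. -/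
theorem stab_of_grounded {θ : ℕ → Sentence} {φ : Sentence} (h : Grounded θ φ) :
    ∃ N, ∀ m n, N ≤ m → N ≤ n → (W θ m φ ↔ W θ n φ) := by
  induction h with
  | bot => exact ⟨0, fun m n _ _ => by rw [W_bot, W_bot]⟩
  | A t => exact ⟨0, fun m n _ _ => by simp [W_A]⟩
  | M t => exact ⟨0, fun m n _ _ => by simp [W_M]⟩
  | and h1 h2 ih1 ih2 =>
      obtain ⟨N1, s1⟩ := ih1; obtain ⟨N2, s2⟩ := ih2
      refine ⟨max N1 N2, fun m n hm hn => ?_⟩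
      rw [W_and, W_and]
      exact and_congr (s1 m n (le_trans (le_max_left _ _) hm) (le_trans (le_max_left _ _) hn))
        (s2 m n (le_trans (le_max_right _ _) hm) (le_trans (le_max_right _ _) hn))
  | or h1 h2 ih1 ih2 =>
      obtain ⟨N1, s1⟩ := ih1; obtain ⟨N2, s2⟩ := ih2
      refine ⟨max N1 N2, fun m n hm hn => ?_⟩
      rw [W_or, W_or]
      exact or_congr (s1 m n (le_trans (le_max_left _ _) hm) (le_trans (le_max_left _ _) hn))
        (s2 m n (le_trans (le_max_right _ _) hm) (le_trans (le_max_right _ _) hn))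
  | imp h1 h2 ih1 ih2 =>
      obtain ⟨N1, s1⟩ := ih1; obtain ⟨N2, s2⟩ := ih2
      refine ⟨max N1 N2, fun m n hm hn => ?_⟩
      rw [W_imp, W_imp]
      exact imp_congr (s1 m n (le_trans (le_max_left _ _) hm) (le_trans (le_max_left _ _) hn))
        (s2 m n (le_trans (le_max_right _ _) hm) (le_trans (le_max_right _ _) hn))
  | T h ih =>
      obtain ⟨N, s⟩ := ih
      refine ⟨N + 1, fun m n hm hn => ?_⟩
      obtain ⟨m', rfl⟩ : ∃ k, m = k + 1 := ⟨m - 1, by omega⟩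
      obtain ⟨n', rfl⟩ : ∃ k, n = k + 1 := ⟨n - 1, by omega⟩
      rw [W_T, W_T]
      exact s m' n' (by omega) (by omega)

/-- The released form of axiom (7) is stably true for grounded contents. -/
theorem sv_T_iff {θ : ℕ → Sentence} {t : Term} (h : Grounded θ (t.eval θ)) :
    SV θ (Sentence.and (Sentence.imp (t.eval θ) (Sentence.T t))
      (Sentence.imp (Sentence.T t) (t.eval θ))) := by
  obtain ⟨N, s⟩ := stab_of_grounded h
  refine ⟨N + 1, fun n hn => ?_⟩
  obtain ⟨n', rfl⟩ : ∃ k, n = k + 1 := ⟨n - 1, by omega⟩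
  rw [W_and, W_imp, W_imp, W_T]
  constructor
  · exact fun hw => (s (n' + 1) n' (by omega) (by omega)).mp hw
  · exact fun hw => (s n' (n' + 1) (by omega) (by omega)).mp hw

end Limit

section QDef

attribute [local instance] Classical.propDecidable

theorem flg_zero {θ : ℕ → Sentence} {φ : Sentence} (h : Grounded θ φ) : flg θ φ = 0 := by
  unfold flg; rw [if_pos h]

theorem flg_one {θ : ℕ → Sentence} {φ : Sentence} (h : ¬ Grounded θ φ) : flg θ φ = 1 := by
  unfold flg; rw [if_neg h]

theorem lex4 {m n f1 f2 g1 g2 s1 s2 : ℕ}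
    (h : m < n ∨ (m = n ∧ (f1 < f2 ∨ (f1 = f2 ∧ (g1 < g2 ∨ (g1 = g2 ∧ s1 < s2)))))) :
    Prod.Lex (fun a₁ a₂ : ℕ => a₁ < a₂)
      (Prod.Lex (fun a₁ a₂ : ℕ => a₁ < a₂)
        (Prod.Lex (fun a₁ a₂ : ℕ => a₁ < a₂) fun a₁ a₂ : ℕ => a₁ < a₂))
      (m, f1, g1, s1) (n, f2, g2, s2) := by
  rcases h with h | ⟨rfl, h⟩
  · exact Prod.Lex.left _ _ h
  refine Prod.Lex.right _ ?_
  rcases h with h | ⟨rfl, h⟩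
  · exact Prod.Lex.left _ _ h
  refine Prod.Lex.right _ ?_
  rcases h with h | ⟨rfl, h⟩
  · exact Prod.Lex.left _ _ h
  · exact Prod.Lex.right _ h

theorem lex_step {θ : ℕ → Sentence} {m n : ℕ} {c p : Sentence} (hmn : m ≤ n)
    (hsz : sizeOf c < sizeOf p) (hg : Grounded θ p → Grounded θ c)
    (hr : Grounded θ p → grk θ c < grk θ p) :
    Prod.Lex (fun a₁ a₂ : ℕ => a₁ < a₂)
      (Prod.Lex (fun a₁ a₂ : ℕ => a₁ < a₂)
        (Prod.Lex (fun a₁ a₂ : ℕ => a₁ < a₂) fun a₁ a₂ : ℕ => a₁ < a₂))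
      (m, flg θ c, grk θ c, sizeOf c) (n, flg θ p, grk θ p, sizeOf p) := by
  apply lex4
  rcases Nat.lt_or_ge m n with h | h
  · exact Or.inl h
  have hmn' : m = n := le_antisymm hmn h
  refine Or.inr ⟨hmn', ?_⟩
  by_cases hp : Grounded θ p
  · exact Or.inr ⟨by rw [flg_zero (hg hp), flg_zero hp], Or.inl (hr hp)⟩
  · by_cases hc : Grounded θ c
    · exact Or.inl (by rw [flg_zero hc, flg_one hp]; omega)
    · exact Or.inr ⟨by rw [flg_one hc, flg_one hp],
        Or.inr ⟨by rw [grk_ungrounded hc, grk_ungrounded hp], hsz⟩⟩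

/-- The step-indexed invariant. -/
def Q (θ : ℕ → Sentence) : ℕ → Sentence → Prop
  | _, Sentence.bot => False
  | n, Sentence.A t => Grounded θ (t.eval θ) ∧ Thm θ (Sentence.A t) ∧ SV θ (t.eval θ) ∧
      ∀ m, m < n → Q θ m (t.eval θ)
  | n, Sentence.T t =>
      if h : Grounded θ (t.eval θ) then ∀ m, m ≤ n → Q θ m (t.eval θ) else False
  | _, Sentence.M t => Grounded θ (t.eval θ)
  | n, Sentence.and φ ψ => Q θ n φ ∧ Q θ n ψ
  | n, Sentence.or φ ψ =>
      (Thm θ φ ∧ SV θ φ ∧ ∀ m, m ≤ n → Q θ m φ) ∨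
      (Thm θ ψ ∧ SV θ ψ ∧ ∀ m, m ≤ n → Q θ m ψ)
  | n, Sentence.imp φ ψ => Thm θ φ → SV θ φ → (∀ m, m ≤ n → Q θ m φ) → Q θ n ψ
  termination_by n φ => (n, flg θ φ, grk θ φ, sizeOf φ)
  decreasing_by
  · simp_wf; exact lex4 (Or.inl (by assumption))
  · simp_wf
    rename_i hm
    rcases Nat.lt_or_ge m n with hlt | hge
    · exact lex4 (Or.inl hlt)
    · have hmn : m = n := le_antisymm hm hge
      exact lex4 (Or.inr ⟨hmn, Or.inr ⟨by rw [flg_zero h, flg_zero (Grounded.T h)],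
        Or.inl (grk_lt_T h)⟩⟩)
  · simp_wf; exact lex_step le_rfl (by simp; try omega) (fun h => (Grounded.and_inv h).1)
      (fun h => (grk_lt_and h).1)
  · simp_wf; exact lex_step le_rfl (by simp; try omega) (fun h => (Grounded.and_inv h).2)
      (fun h => (grk_lt_and h).2)
  · simp_wf; exact lex_step (by assumption) (by simp; try omega) (fun h => (Grounded.or_inv h).1)
      (fun h => (grk_lt_or h).1)
  · simp_wf; exact lex_step (by assumption) (by simp; try omega) (fun h => (Grounded.or_inv h).2)
      (fun h => (grk_lt_or h).2)
  · simp_wf; exact lex_step (by assumption) (by simp; try omega) (fun h => (Grounded.imp_inv h).1)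
      (fun h => (grk_lt_imp h).1)
  · simp_wf; exact lex_step le_rfl (by simp; try omega) (fun h => (Grounded.imp_inv h).2)
      (fun h => (grk_lt_imp h).2)

end QDef

section QLemmas

theorem Q_bot {θ : ℕ → Sentence} {n : ℕ} : ¬ Q θ n Sentence.bot := by
  intro h; rw [Q] at h; exact h

theorem Q_A {θ : ℕ → Sentence} {n : ℕ} {t : Term} :
    Q θ n (Sentence.A t) ↔ (Grounded θ (t.eval θ) ∧ Thm θ (Sentence.A t) ∧ SV θ (t.eval θ) ∧
      ∀ m, m < n → Q θ m (t.eval θ)) := by rw [Q]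

theorem Q_M {θ : ℕ → Sentence} {n : ℕ} {t : Term} :
    Q θ n (Sentence.M t) ↔ Grounded θ (t.eval θ) := by rw [Q]

theorem Q_T {θ : ℕ → Sentence} {n : ℕ} {t : Term} :
    Q θ n (Sentence.T t) ↔ (Grounded θ (t.eval θ) ∧ ∀ m, m ≤ n → Q θ m (t.eval θ)) := by
  rw [Q]
  by_cases h : Grounded θ (t.eval θ)
  · simp [h]
  · simp [h]

theorem Q_and {θ : ℕ → Sentence} {n : ℕ} {φ ψ : Sentence} :
    Q θ n (Sentence.and φ ψ) ↔ (Q θ n φ ∧ Q θ n ψ) := by rw [Q]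

theorem Q_or {θ : ℕ → Sentence} {n : ℕ} {φ ψ : Sentence} :
    Q θ n (Sentence.or φ ψ) ↔
      ((Thm θ φ ∧ SV θ φ ∧ ∀ m, m ≤ n → Q θ m φ) ∨
       (Thm θ ψ ∧ SV θ ψ ∧ ∀ m, m ≤ n → Q θ m ψ)) := by rw [Q]

theorem Q_imp {θ : ℕ → Sentence} {n : ℕ} {φ ψ : Sentence} :
    Q θ n (Sentence.imp φ ψ) ↔
      (Thm θ φ → SV θ φ → (∀ m, m ≤ n → Q θ m φ) → Q θ n ψ) := by rw [Q]

end QLemmas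

section Hilbert

/-- Hilbert axiom instances are pointwise true at the limit world. -/
theorem sv_hilb {θ : ℕ → Sentence} {s t u a : Term} (h : HilbertAxT s t u a) :
    ∀ k, W θ k (a.eval θ) := by
  cases h <;> intro k <;>
    simp only [Term.eval, W_imp, W_and, W_or, W_bot] <;> tauto

/-- Hilbert axiom instances have grounded evaluations whenever their
components do. -/
theorem gr_hilb {θ : ℕ → Sentence} {s t u a : Term} (h : HilbertAxT s t u a)
    (gs : Grounded θ (s.eval θ)) (gt : Grounded θ (t.eval θ))
    (gu : Grounded θ (u.eval θ)) : Grounded θ (a.eval θ) := by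
  cases h <;> simp only [Term.eval]
  · exact .imp gs (.imp gt gs)
  · exact .imp (.imp gs (.imp gt gu)) (.imp (.imp gs gt) (.imp gs gu))
  · exact .imp (.and gs gt) gs
  · exact .imp (.and gs gt) gt
  · exact .imp gs (.imp gt (.and gs gt))
  · exact .imp gs (.or gs gt)
  · exact .imp gt (.or gs gt)
  · exact .imp (.imp gs gu) (.imp (.imp gt gu) (.imp (.or gs gt) gu))
  · exact .imp .bot gs

/-- Hilbert axiom instances satisfy the invariant at every level. -/
theorem q_hilb {θ : ℕ → Sentence} {s t u a : Term} (h : HilbertAxT s t u a) :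
    ∀ j, Q θ j (a.eval θ) := by
  intro j
  cases h <;> simp only [Term.eval]
  -- imp1 : s → (t → s)
  · rw [Q_imp]; intro h1 s1 q1
    rw [Q_imp]; intro h2 s2 q2
    exact q1 j le_rfl
  -- imp2
  · rw [Q_imp]; intro h1 s1 q1
    rw [Q_imp]; intro h2 s2 q2
    rw [Q_imp]; intro h3 s3 q3
    have qt : ∀ m, m ≤ j → Q θ m (t.eval θ) := fun m hm =>
      (Q_imp.mp (q2 m hm)) h3 s3 (fun i hi => q3 i (le_trans hi hm))
    have himp : Q θ j (Sentence.imp (t.eval θ) (u.eval θ)) :=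
      (Q_imp.mp (q1 j le_rfl)) h3 s3 q3
    exact (Q_imp.mp himp) (Thm.mp h3 h2) (sv_mp s3 s2) qt
  -- andE1
  · rw [Q_imp]; intro h1 s1 q1
    exact (Q_and.mp (q1 j le_rfl)).1
  -- andE2
  · rw [Q_imp]; intro h1 s1 q1
    exact (Q_and.mp (q1 j le_rfl)).2
  -- andI
  · rw [Q_imp]; intro h1 s1 q1
    rw [Q_imp]; intro h2 s2 q2
    exact Q_and.mpr ⟨q1 j le_rfl, q2 j le_rfl⟩
  -- orI1
  · rw [Q_imp]; intro h1 s1 q1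
    exact Q_or.mpr (Or.inl ⟨h1, s1, q1⟩)
  -- orI2
  · rw [Q_imp]; intro h1 s1 q1
    exact Q_or.mpr (Or.inr ⟨h1, s1, q1⟩)
  -- orE
  · rw [Q_imp]; intro h1 s1 q1
    rw [Q_imp]; intro h2 s2 q2
    rw [Q_imp]; intro h3 s3 q3
    rcases Q_or.mp (q3 j le_rfl) with ⟨hx, sx, qx⟩ | ⟨hx, sx, qx⟩
    · exact (Q_imp.mp (q1 j le_rfl)) hx sx qx
    · exact (Q_imp.mp (q2 j le_rfl)) hx sx qx
  -- exfalso
  · rw [Q_imp]; intro h1 s1 q1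
    exact absurd (q1 j le_rfl) Q_bot

end Hilbert

section Main

/-- Soundness of ATM for the invariant: every theorem is stably true at the
limit world and satisfies the step-indexed invariant at every level. -/
theorem sound {θ : ℕ → Sentence} {φ : Sentence} (h : Thm θ φ) :
    SV θ φ ∧ ∀ n, Q θ n φ := by
  induction h with
  | @logical s t u a hax =>
      constructor
      · exact svI fun k => W_imp.mpr fun _ => W_A
      · intro n
        rw [Q_imp]; intro hC sC qC
        have qn := qC n le_rfl
        rw [Q_and] at qn
        obtain ⟨qn1, qu⟩ := qn
        rw [Q_and] at qn1
        obtain ⟨qs, qt⟩ := qn1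
        have Gs := Q_M.mp qs
        have Gt := Q_M.mp qt
        have Gu := Q_M.mp qu
        exact Q_A.mpr ⟨gr_hilb hax Gs Gt Gu, Thm.mp hC (Thm.logical hax),
          svI (fun k => sv_hilb hax k), fun m _ => q_hilb hax m⟩
  | @ax1 t hg =>
      exact ⟨svI fun k => W_M, fun n => Q_M.mpr hg⟩
  | ax2and s t =>
      constructor
      · exact svI fun k => by
          simp only [Sentence.iff, W_and, W_imp]
          exact ⟨fun _ => W_M, fun _ => ⟨W_M, W_M⟩⟩
      · intro n
        rw [Sentence.iff, Q_and]
        constructor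
        · rw [Q_imp]; intro h1 s1 q1
          have := Q_and.mp (q1 n le_rfl)
          exact Q_M.mpr (Grounded.and (Q_M.mp this.1) (Q_M.mp this.2))
        · rw [Q_imp]; intro h1 s1 q1
          have := Q_M.mp (q1 n le_rfl)
          have h2 := Grounded.and_inv this
          exact Q_and.mpr ⟨Q_M.mpr h2.1, Q_M.mpr h2.2⟩
  | ax2or s t =>
      constructor
      · exact svI fun k => by
          simp only [Sentence.iff, W_and, W_imp]
          exact ⟨fun _ => W_M, fun _ => ⟨W_M, W_M⟩⟩
      · intro n
        rw [Sentence.iff, Q_and]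
        constructor
        · rw [Q_imp]; intro h1 s1 q1
          have := Q_and.mp (q1 n le_rfl)
          exact Q_M.mpr (Grounded.or (Q_M.mp this.1) (Q_M.mp this.2))
        · rw [Q_imp]; intro h1 s1 q1
          have := Q_M.mp (q1 n le_rfl)
          have h2 := Grounded.or_inv this
          exact Q_and.mpr ⟨Q_M.mpr h2.1, Q_M.mpr h2.2⟩
  | ax2imp s t =>
      constructor
      · exact svI fun k => by
          simp only [Sentence.iff, W_and, W_imp]
          exact ⟨fun _ => W_M, fun _ => ⟨W_M, W_M⟩⟩
      · intro n
        rw [Sentence.iff, Q_and]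
        constructor
        · rw [Q_imp]; intro h1 s1 q1
          have := Q_and.mp (q1 n le_rfl)
          exact Q_M.mpr (Grounded.imp (Q_M.mp this.1) (Q_M.mp this.2))
        · rw [Q_imp]; intro h1 s1 q1
          have := Q_M.mp (q1 n le_rfl)
          have h2 := Grounded.imp_inv this
          exact Q_and.mpr ⟨Q_M.mpr h2.1, Q_M.mpr h2.2⟩
  | ax3 t =>
      constructor
      · exact svI fun k => W_imp.mpr fun _ => W_M
      · intro n
        rw [Q_imp]; intro h1 s1 q1
        exact Q_M.mpr (Q_A.mp (q1 n le_rfl)).1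
  | ax4 s t =>
      constructor
      · exact svI fun k => W_imp.mpr fun _ => W_A
      · intro n
        rw [Q_imp]; intro h1 s1 q1
        have := Q_and.mp (q1 n le_rfl)
        obtain ⟨gs, hs, ss, fs⟩ := Q_A.mp this.1
        obtain ⟨gt, ht, st, ft⟩ := Q_A.mp this.2
        refine Q_A.mpr ⟨Grounded.and gs gt, Thm.mp h1 (Thm.ax4 s t), sv_and ss st, ?_⟩
        intro m hm
        exact Q_and.mpr ⟨fs m hm, ft m hm⟩
  | ax5 s t =>
      constructor
      · exact svI fun k => W_imp.mpr fun _ => W_A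
      · intro n
        rw [Q_imp]; intro h1 s1 q1
        have := Q_and.mp (q1 n le_rfl)
        obtain ⟨gs, hAs, ss, fs⟩ := Q_A.mp this.1
        obtain ⟨gst, hAst, sst, fst⟩ := Q_A.mp this.2
        have gt : Grounded θ (t.eval θ) := (Grounded.imp_inv gst).2
        refine Q_A.mpr ⟨gt, Thm.mp h1 (Thm.ax5 s t), sv_mp ss sst, ?_⟩
        intro m hm
        exact (Q_imp.mp (fst m hm)) (Thm.release hAs) ss
          (fun i hi => fs i (lt_of_le_of_lt hi hm))
  | ax6 t =>
      constructor
      · exact svI fun k => W_imp.mpr fun _ => W_A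
      · intro n
        rw [Q_imp]; intro hM sM qM
        have gt : Grounded θ (t.eval θ) := Q_M.mp (qM n le_rfl)
        refine Q_A.mpr ⟨Grounded.imp gt (Grounded.A t),
          Thm.mp hM (Thm.ax6 t), svI (fun k => W_imp.mpr fun _ => W_A), ?_⟩
        intro m hm
        simp only [Term.eval]
        rw [Q_imp]; intro ht st qt
        refine Q_A.mpr ⟨gt, ?_, st, fun i hi => qt i (le_of_lt hi)⟩
        exact Thm.mp ht (Thm.release (Thm.mp hM (Thm.ax6 t)))
  | ax7 t =>
      constructor
      · exact svI fun k => W_imp.mpr fun _ => W_A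
      · intro n
        rw [Q_imp]; intro hM sM qM
        have gt : Grounded θ (t.eval θ) := Q_M.mp (qM n le_rfl)
        refine Q_A.mpr ⟨?_, Thm.mp hM (Thm.ax7 t), ?_, ?_⟩
        · exact Grounded.and (Grounded.imp gt (Grounded.T gt))
            (Grounded.imp (Grounded.T gt) gt)
        · exact sv_T_iff gt
        · intro m hm
          simp only [Term.iff, Term.eval]
          rw [Q_and]
          constructor
          · rw [Q_imp]; intro ht st qt
            exact Q_T.mpr ⟨gt, qt⟩
          · rw [Q_imp]; intro hT sT qT
            exact (Q_T.mp (qT m le_rfl)).2 m le_rfl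
  | ax8 t =>
      constructor
      · exact svI fun k => W_imp.mpr fun _ => W_A
      · intro n
        rw [Q_imp]; intro hN sN qN
        exfalso
        obtain ⟨N, hs⟩ := sN
        have := hs N le_rfl
        rw [Sentence.neg, W_imp, W_bot] at this
        exact this W_M
  | @ax9 t t' heq =>
      constructor
      · exact svI fun k => W_imp.mpr fun _ => W_A
      · intro n
        rw [Q_imp]; intro hM sM qM
        have gt : Grounded θ (t.eval θ) := Q_M.mp (qM n le_rfl)
        have gt' : Grounded θ (t'.eval θ) := heq ▸ gt
        refine Q_A.mpr ⟨?_, Thm.mp hM (Thm.ax9 heq), ?_, ?_⟩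
        · simp only [Term.iff, Term.eval]
          exact Grounded.and (Grounded.imp gt gt') (Grounded.imp gt' gt)
        · refine svI fun k => ?_
          simp only [Term.iff, Term.eval, W_and, W_imp]
          rw [← heq]
          exact ⟨id, id⟩
        · intro m hm
          simp only [Term.iff, Term.eval]
          rw [Q_and]
          constructor
          · rw [Q_imp]; intro h1 s1 q1
            exact heq ▸ (q1 m le_rfl)
          · rw [Q_imp]; intro h1 s1 q1
            exact heq ▸ (q1 m le_rfl)
  | conj h1 h2 ih1 ih2 =>
      exact ⟨sv_and ih1.1 ih2.1, fun n => Q_and.mpr ⟨ih1.2 n, ih2.2 n⟩⟩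
  | mp h1 h2 ih1 ih2 =>
      constructor
      · exact sv_mp ih1.1 ih2.1
      · intro n
        exact (Q_imp.mp (ih2.2 n)) h1 ih1.1 (fun m _ => ih1.2 m)
  | @release t h1 ih =>
      constructor
      · exact (Q_A.mp (ih.2 0)).2.2.1
      · intro n
        exact (Q_A.mp (ih.2 (n+1))).2.2.2 n (Nat.lt_succ_self n)

end Main

theorem atm_not_prove_assert_of_ungrounded (θ : ℕ → Sentence)
    (h1 : θ 1 = liar1) (h2 : θ 2 = liar2) :
    ∀ t : Term, ¬ Grounded θ (t.eval θ) → ¬ Thm θ (Sentence.A t) := by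
  intro t hng hthm
  exact hng (Q_A.mp ((sound hthm).2 0)).1

end ATM
end

section
/- For every term t, if the evaluation t̂ is a theorem of the formal system ATM, then M[t] is a theorem of ATM. -/
namespace ATM

section Helpers

variable {θ : ℕ → Sentence}

lemma dot_eval (θ : ℕ → Sentence) : ∀ φ : Sentence, φ.dot.eval θ = φ
  | Sentence.bot => rfl
  | Sentence.A t => rfl
  | Sentence.T t => rfl
  | Sentence.M t => rfl
  | Sentence.and φ ψ => by
      simp [Sentence.dot, Term.eval, dot_eval θ φ, dot_eval θ ψ]
  | Sentence.or φ ψ => by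
      simp [Sentence.dot, Term.eval, dot_eval θ φ, dot_eval θ ψ]
  | Sentence.imp φ ψ => by
      simp [Sentence.dot, Term.eval, dot_eval θ φ, dot_eval θ ψ]

/-- Release of an internal logical-axiom instance: if `M[s]`, `M[t]`, `M[u]`
are theorems, then the evaluation of the Hilbert-axiom instance is a theorem. -/
lemma relTaut {s t u a : Term} (h : HilbertAxT s t u a)
    (hs : Thm θ (Sentence.M s)) (ht : Thm θ (Sentence.M t))
    (hu : Thm θ (Sentence.M u)) : Thm θ (a.eval θ) :=
  Thm.release (Thm.mp (Thm.conj (Thm.conj hs ht) hu) (Thm.logical h))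

lemma M_M (s : Term) : Thm θ (Sentence.M (Term.M s)) := Thm.ax1 (Grounded.M s)

/-- Meta-level left projection from a conjunction theorem, for sentences that
are evaluations of terms with provable meaningfulness. -/
lemma projAnd1 {p q : Term} (hp : Thm θ (Sentence.M p)) (hq : Thm θ (Sentence.M q))
    (hand : Thm θ (Sentence.and (p.eval θ) (q.eval θ))) : Thm θ (p.eval θ) :=
  Thm.mp hand (relTaut (HilbertAxT.andE1 p q p) hp hq hp)

lemma projAnd2 {p q : Term} (hp : Thm θ (Sentence.M p)) (hq : Thm θ (Sentence.M q))
    (hand : Thm θ (Sentence.and (p.eval θ) (q.eval θ))) : Thm θ (q.eval θ) :=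
  Thm.mp hand (relTaut (HilbertAxT.andE2 p q p) hp hq hp)

/-- `M` is joinable over `∧̇`. -/
lemma joinAnd (s t : Term) (hs : Thm θ (Sentence.M s)) (ht : Thm θ (Sentence.M t)) :
    Thm θ (Sentence.M (Term.and s t)) := by
  have hp : Thm θ (Sentence.M (Term.imp (Term.and (Term.M s) (Term.M t))
      (Term.M (Term.and s t)))) :=
    Thm.ax1 (Grounded.imp (Grounded.and (Grounded.M s) (Grounded.M t)) (Grounded.M _))
  have hq : Thm θ (Sentence.M (Term.imp (Term.M (Term.and s t))
      (Term.and (Term.M s) (Term.M t)))) :=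
    Thm.ax1 (Grounded.imp (Grounded.M _) (Grounded.and (Grounded.M s) (Grounded.M t)))
  have hfwd : Thm θ (Sentence.imp (Sentence.and (Sentence.M s) (Sentence.M t))
      (Sentence.M (Term.and s t))) :=
    projAnd1 hp hq (Thm.ax2and s t)
  exact Thm.mp (Thm.conj hs ht) hfwd

/-- `M` splits over `∧̇`. -/
lemma splitAnd (s t : Term) (h : Thm θ (Sentence.M (Term.and s t))) :
    Thm θ (Sentence.M s) ∧ Thm θ (Sentence.M t) := by
  have hp : Thm θ (Sentence.M (Term.imp (Term.and (Term.M s) (Term.M t))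
      (Term.M (Term.and s t)))) :=
    Thm.ax1 (Grounded.imp (Grounded.and (Grounded.M s) (Grounded.M t)) (Grounded.M _))
  have hq : Thm θ (Sentence.M (Term.imp (Term.M (Term.and s t))
      (Term.and (Term.M s) (Term.M t)))) :=
    Thm.ax1 (Grounded.imp (Grounded.M _) (Grounded.and (Grounded.M s) (Grounded.M t)))
  have hbwd : Thm θ (Sentence.imp (Sentence.M (Term.and s t))
      (Sentence.and (Sentence.M s) (Sentence.M t))) :=
    projAnd2 hp hq (Thm.ax2and s t)
  have hX : Thm θ (Sentence.and (Sentence.M s) (Sentence.M t)) := Thm.mp h hbwd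
  exact ⟨projAnd1 (M_M s) (M_M t) hX, projAnd2 (M_M s) (M_M t) hX⟩

/-- `M` splits over `→̇`. -/
lemma splitImp (s t : Term) (h : Thm θ (Sentence.M (Term.imp s t))) :
    Thm θ (Sentence.M s) ∧ Thm θ (Sentence.M t) := by
  have hp : Thm θ (Sentence.M (Term.imp (Term.and (Term.M s) (Term.M t))
      (Term.M (Term.imp s t)))) :=
    Thm.ax1 (Grounded.imp (Grounded.and (Grounded.M s) (Grounded.M t)) (Grounded.M _))
  have hq : Thm θ (Sentence.M (Term.imp (Term.M (Term.imp s t))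
      (Term.and (Term.M s) (Term.M t)))) :=
    Thm.ax1 (Grounded.imp (Grounded.M _) (Grounded.and (Grounded.M s) (Grounded.M t)))
  have hbwd : Thm θ (Sentence.imp (Sentence.M (Term.imp s t))
      (Sentence.and (Sentence.M s) (Sentence.M t))) :=
    projAnd2 hp hq (Thm.ax2imp s t)
  have hX : Thm θ (Sentence.and (Sentence.M s) (Sentence.M t)) := Thm.mp h hbwd
  exact ⟨projAnd1 (M_M s) (M_M t) hX, projAnd2 (M_M s) (M_M t) hX⟩

/-- Meaningfulness transfers along equality of evaluations. -/
lemma transferM {s t : Term} (he : s.eval θ = t.eval θ)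
    (hs : Thm θ (Sentence.M s)) : Thm θ (Sentence.M t) := by
  have hA : Thm θ (Sentence.A (Term.iff s t)) := Thm.mp hs (Thm.ax9 he)
  have hM : Thm θ (Sentence.M (Term.iff s t)) := Thm.mp hA (Thm.ax3 _)
  have h1 : Thm θ (Sentence.M (Term.imp s t)) := (splitAnd _ _ hM).1
  exact (splitImp s t h1).2

/-- Every theorem φ has `M[t]` provable for every term `t` evaluating to φ. -/
lemma thm_eval_M (θ : ℕ → Sentence) {φ : Sentence} (h : Thm θ φ) :
    ∀ t : Term, t.eval θ = φ → Thm θ (Sentence.M t) := by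
  induction h with
  | @logical s t u a hax =>
      intro v hv
      refine Thm.ax1 ?_
      rw [hv]
      exact Grounded.imp
        (Grounded.and (Grounded.and (Grounded.M s) (Grounded.M t)) (Grounded.M u))
        (Grounded.A a)
  | @ax1 t hg =>
      intro v hv
      exact Thm.ax1 (by rw [hv]; exact Grounded.M t)
  | ax2and s t =>
      intro v hv
      refine Thm.ax1 ?_
      rw [hv]
      exact Grounded.and
        (Grounded.imp (Grounded.and (Grounded.M s) (Grounded.M t)) (Grounded.M _))
        (Grounded.imp (Grounded.M _) (Grounded.and (Grounded.M s) (Grounded.M t)))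
  | ax2or s t =>
      intro v hv
      refine Thm.ax1 ?_
      rw [hv]
      exact Grounded.and
        (Grounded.imp (Grounded.and (Grounded.M s) (Grounded.M t)) (Grounded.M _))
        (Grounded.imp (Grounded.M _) (Grounded.and (Grounded.M s) (Grounded.M t)))
  | ax2imp s t =>
      intro v hv
      refine Thm.ax1 ?_
      rw [hv]
      exact Grounded.and
        (Grounded.imp (Grounded.and (Grounded.M s) (Grounded.M t)) (Grounded.M _))
        (Grounded.imp (Grounded.M _) (Grounded.and (Grounded.M s) (Grounded.M t)))
  | ax3 t =>
      intro v hv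
      exact Thm.ax1 (by rw [hv]; exact Grounded.imp (Grounded.A t) (Grounded.M t))
  | ax4 s t =>
      intro v hv
      refine Thm.ax1 ?_
      rw [hv]
      exact Grounded.imp (Grounded.and (Grounded.A s) (Grounded.A t)) (Grounded.A _)
  | ax5 s t =>
      intro v hv
      refine Thm.ax1 ?_
      rw [hv]
      exact Grounded.imp (Grounded.and (Grounded.A s) (Grounded.A _)) (Grounded.A t)
  | ax6 t =>
      intro v hv
      exact Thm.ax1 (by rw [hv]; exact Grounded.imp (Grounded.M t) (Grounded.A _))
  | ax7 t =>
      intro v hv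
      exact Thm.ax1 (by rw [hv]; exact Grounded.imp (Grounded.M t) (Grounded.A _))
  | ax8 t =>
      intro v hv
      refine Thm.ax1 ?_
      rw [hv]
      exact Grounded.imp (Grounded.imp (Grounded.M t) Grounded.bot) (Grounded.A _)
  | @ax9 t t' he =>
      intro v hv
      exact Thm.ax1 (by rw [hv]; exact Grounded.imp (Grounded.M t) (Grounded.A _))
  | @conj φ ψ h1 h2 ih1 ih2 =>
      intro v hv
      have m1 := ih1 φ.dot (dot_eval θ φ)
      have m2 := ih2 ψ.dot (dot_eval θ ψ)
      refine transferM ?_ (joinAnd _ _ m1 m2)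
      show Sentence.and (φ.dot.eval θ) (ψ.dot.eval θ) = v.eval θ
      rw [dot_eval θ φ, dot_eval θ ψ, hv]
  | @mp φ ψ h1 h2 ih1 ih2 =>
      intro v hv
      have m2 : Thm θ (Sentence.M (Term.imp φ.dot ψ.dot)) :=
        ih2 (Sentence.imp φ ψ).dot (dot_eval θ (Sentence.imp φ ψ))
      have m3 := (splitImp _ _ m2).2
      refine transferM ?_ m3
      rw [dot_eval θ ψ, hv]
  | @release u hA ih =>
      intro v hv
      have hM : Thm θ (Sentence.M u) := Thm.mp hA (Thm.ax3 u)
      exact transferM hv.symm hM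

end Helpers


theorem atm_theorems_meaningful (θ : ℕ → Sentence)
    (h1 : θ 1 = liar1) (h2 : θ 2 = liar2) :
    ∀ t : Term, Thm θ (t.eval θ) → Thm θ (Sentence.M t) := by
  intro t ht
  exact thm_eval_M θ ht t rfl

end ATM
end

section
/- For every term t, if the evaluation t̂ is a theorem of the formal system ATM, then A[t] is a theorem of ATM. -/
namespace ATM

/-- The canonical (dotted) term of a sentence evaluates to that sentence. -/
lemma eval_dot (θ : ℕ → Sentence) : ∀ φ : Sentence, (Sentence.dot φ).eval θ = φ := by
  intro φ
  induction φ with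
  | bot => rfl
  | A t => rfl
  | T t => rfl
  | M t => rfl
  | and φ ψ ih1 ih2 => simp [Sentence.dot, Term.eval, ih1, ih2]
  | or φ ψ ih1 ih2 => simp [Sentence.dot, Term.eval, ih1, ih2]
  | imp φ ψ ih1 ih2 => simp [Sentence.dot, Term.eval, ih1, ih2]

/-- Any grounded sentence has a meaningful canonical term. -/
lemma M_dot {θ : ℕ → Sentence} {φ : Sentence} (h : Grounded θ φ) :
    Thm θ (Sentence.M (Sentence.dot φ)) :=
  Thm.ax1 (by rw [eval_dot]; exact h)

/-- Conjunction projection (left) for conjunctions of grounded sentences. -/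
lemma projL {θ : ℕ → Sentence} {X Y : Sentence}
    (hXY : Thm θ (Sentence.and X Y)) (gX : Grounded θ X) (gY : Grounded θ Y) :
    Thm θ X := by
  have m1 : Thm θ (Sentence.M X.dot) := M_dot gX
  have m2 : Thm θ (Sentence.M Y.dot) := M_dot gY
  have hA : Thm θ (Sentence.A (Term.imp (Term.and X.dot Y.dot) X.dot)) :=
    Thm.mp (Thm.conj (Thm.conj m1 m2) m1) (Thm.logical (HilbertAxT.andE1 X.dot Y.dot X.dot))
  have hrel : Thm θ (Sentence.imp (Sentence.and X Y) X) := by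
    have h := Thm.release hA
    simpa [Term.eval, eval_dot] using h
  exact Thm.mp hXY hrel

/-- Conjunction projection (right) for conjunctions of grounded sentences. -/
lemma projR {θ : ℕ → Sentence} {X Y : Sentence}
    (hXY : Thm θ (Sentence.and X Y)) (gX : Grounded θ X) (gY : Grounded θ Y) :
    Thm θ Y := by
  have m1 : Thm θ (Sentence.M X.dot) := M_dot gX
  have m2 : Thm θ (Sentence.M Y.dot) := M_dot gY
  have hA : Thm θ (Sentence.A (Term.imp (Term.and X.dot Y.dot) Y.dot)) :=
    Thm.mp (Thm.conj (Thm.conj m1 m2) m1) (Thm.logical (HilbertAxT.andE2 X.dot Y.dot X.dot))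
  have hrel : Thm θ (Sentence.imp (Sentence.and X Y) Y) := by
    have h := Thm.release hA
    simpa [Term.eval, eval_dot] using h
  exact Thm.mp hXY hrel

section Mlemmas
variable {θ : ℕ → Sentence}

private lemma g1 (s t c : Term) :
    Grounded θ (Sentence.imp (Sentence.and (Sentence.M s) (Sentence.M t))
      (Sentence.M c)) :=
  Grounded.imp (Grounded.and (Grounded.M _) (Grounded.M _)) (Grounded.M _)

private lemma g2 (s t c : Term) :
    Grounded θ (Sentence.imp (Sentence.M c)
      (Sentence.and (Sentence.M s) (Sentence.M t))) :=
  Grounded.imp (Grounded.M _) (Grounded.and (Grounded.M _) (Grounded.M _))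

/-- Forward direction of axiom (2) for ∧̇, usable thanks to projection. -/
lemma Mand_fwd {s t : Term} (h1 : Thm θ (Sentence.M s)) (h2 : Thm θ (Sentence.M t)) :
    Thm θ (Sentence.M (Term.and s t)) := by
  have fwd := projL (θ := θ) (Thm.ax2and s t) (g1 s t (Term.and s t)) (g2 s t (Term.and s t))
  exact Thm.mp (Thm.conj h1 h2) fwd

/-- Backward direction of axiom (2) for ∧̇. -/
lemma Mand_bwd {s t : Term} (h : Thm θ (Sentence.M (Term.and s t))) :
    Thm θ (Sentence.M s) ∧ Thm θ (Sentence.M t) := by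
  have bwd := projR (θ := θ) (Thm.ax2and s t) (g1 s t (Term.and s t)) (g2 s t (Term.and s t))
  have hst : Thm θ (Sentence.and (Sentence.M s) (Sentence.M t)) := Thm.mp h bwd
  exact ⟨projL hst (Grounded.M _) (Grounded.M _), projR hst (Grounded.M _) (Grounded.M _)⟩

/-- Backward direction of axiom (2) for →̇. -/
lemma Mimp_bwd {s t : Term} (h : Thm θ (Sentence.M (Term.imp s t))) :
    Thm θ (Sentence.M s) ∧ Thm θ (Sentence.M t) := by
  have bwd := projR (θ := θ) (Thm.ax2imp s t) (g1 s t (Term.imp s t)) (g2 s t (Term.imp s t))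
  have hst : Thm θ (Sentence.and (Sentence.M s) (Sentence.M t)) := Thm.mp h bwd
  exact ⟨projL hst (Grounded.M _) (Grounded.M _), projR hst (Grounded.M _) (Grounded.M _)⟩

/-- Meaningfulness transfers across terms with equal evaluations
(via axiom (9), axiom (3) and the decompositions above). -/
lemma M_transfer {x y : Term} (hM : Thm θ (Sentence.M x))
    (he : x.eval θ = y.eval θ) : Thm θ (Sentence.M y) := by
  have hAiff : Thm θ (Sentence.A (Term.iff x y)) := Thm.mp hM (Thm.ax9 he)
  have hMiff : Thm θ (Sentence.M (Term.iff x y)) := Thm.mp hAiff (Thm.ax3 _)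
  have h1 : Thm θ (Sentence.M (Term.imp y x)) := (Mand_bwd hMiff).2
  exact (Mimp_bwd h1).1

end Mlemmas

/-- Every theorem of ATM is "meaningfully represented": each term evaluating
to a theorem is meaningful. -/
lemma thm_M {θ : ℕ → Sentence} {φ : Sentence} (h : Thm θ φ) :
    ∀ t : Term, t.eval θ = φ → Thm θ (Sentence.M t) := by
  induction h with
  | logical h =>
      intro t ht
      exact Thm.ax1 (by
        rw [ht]
        exact Grounded.imp (Grounded.and (Grounded.and (Grounded.M _) (Grounded.M _))
          (Grounded.M _)) (Grounded.A _))
  | ax1 h =>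
      intro t ht; exact Thm.ax1 (by rw [ht]; exact Grounded.M _)
  | ax2and s t =>
      intro t' ht
      exact Thm.ax1 (by
        rw [ht]
        exact Grounded.and
          (Grounded.imp (Grounded.and (Grounded.M _) (Grounded.M _)) (Grounded.M _))
          (Grounded.imp (Grounded.M _) (Grounded.and (Grounded.M _) (Grounded.M _))))
  | ax2or s t =>
      intro t' ht
      exact Thm.ax1 (by
        rw [ht]
        exact Grounded.and
          (Grounded.imp (Grounded.and (Grounded.M _) (Grounded.M _)) (Grounded.M _))
          (Grounded.imp (Grounded.M _) (Grounded.and (Grounded.M _) (Grounded.M _))))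
  | ax2imp s t =>
      intro t' ht
      exact Thm.ax1 (by
        rw [ht]
        exact Grounded.and
          (Grounded.imp (Grounded.and (Grounded.M _) (Grounded.M _)) (Grounded.M _))
          (Grounded.imp (Grounded.M _) (Grounded.and (Grounded.M _) (Grounded.M _))))
  | ax3 t =>
      intro t' ht; exact Thm.ax1 (by rw [ht]; exact Grounded.imp (Grounded.A _) (Grounded.M _))
  | ax4 s t =>
      intro t' ht
      exact Thm.ax1 (by
        rw [ht]
        exact Grounded.imp (Grounded.and (Grounded.A _) (Grounded.A _)) (Grounded.A _))
  | ax5 s t =>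
      intro t' ht
      exact Thm.ax1 (by
        rw [ht]
        exact Grounded.imp (Grounded.and (Grounded.A _) (Grounded.A _)) (Grounded.A _))
  | ax6 t =>
      intro t' ht; exact Thm.ax1 (by rw [ht]; exact Grounded.imp (Grounded.M _) (Grounded.A _))
  | ax7 t =>
      intro t' ht; exact Thm.ax1 (by rw [ht]; exact Grounded.imp (Grounded.M _) (Grounded.A _))
  | ax8 t =>
      intro t' ht
      exact Thm.ax1 (by
        rw [ht]
        exact Grounded.imp (Grounded.imp (Grounded.M _) Grounded.bot) (Grounded.A _))
  | ax9 h =>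
      intro t' ht; exact Thm.ax1 (by rw [ht]; exact Grounded.imp (Grounded.M _) (Grounded.A _))
  | conj h1 h2 ih1 ih2 =>
      intro t ht
      rename_i φ ψ
      have m1 : Thm θ (Sentence.M φ.dot) := ih1 _ (eval_dot θ φ)
      have m2 : Thm θ (Sentence.M ψ.dot) := ih2 _ (eval_dot θ ψ)
      have mc : Thm θ (Sentence.M (Term.and φ.dot ψ.dot)) := Mand_fwd m1 m2
      refine M_transfer mc ?_
      simp [Term.eval, eval_dot, ht]
  | mp h1 h2 ih1 ih2 =>
      intro t ht
      rename_i φ ψ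
      have mi : Thm θ (Sentence.M (Term.imp φ.dot ψ.dot)) := by
        refine ih2 _ ?_
        simp [Term.eval, eval_dot]
      have m2 : Thm θ (Sentence.M ψ.dot) := (Mimp_bwd mi).2
      refine M_transfer m2 ?_
      rw [eval_dot, ht]
  | release h ih =>
      intro t ht
      rename_i t0
      have m0 : Thm θ (Sentence.M t0) := Thm.mp h (Thm.ax3 t0)
      exact M_transfer m0 ht.symm

theorem atm_theorems_assertible (θ : ℕ → Sentence)
    (h1 : θ 1 = liar1) (h2 : θ 2 = liar2) :
    ∀ t : Term, Thm θ (t.eval θ) → Thm θ (Sentence.A t) := by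
  intro t ht
  have hM : Thm θ (Sentence.M t) := thm_M ht t rfl
  have hA6 : Thm θ (Sentence.A (Term.imp t (Term.A t))) := Thm.mp hM (Thm.ax6 t)
  have hrel : Thm θ (Sentence.imp (t.eval θ) (Sentence.A t)) := by
    have h := Thm.release hA6
    simpa [Term.eval] using h
  exact Thm.mp ht hrel

end ATM
end

section
/- Subjunctive reasoning in ATM: let t₁, …, tₙ be terms and let B(p₁, …, pₙ) be a propositional formula in variables p₁, …, pₙ which is a theorem of the intuitionistic propositional calculus. Then the sentence (M[t₁] ∧ ⋯ ∧ M[tₙ]) → A[Ḃ(t₁, …, tₙ)] is a theorem of ATM, where Ḃ(t₁, …, tₙ) denotes the term obtained from B by substituting the term tᵢ for pᵢ and replacing each connective by its dotted counterpart. -/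
namespace ATM

/-- Propositional formulas in variables of type `α`. -/
inductive PropForm (α : Type) : Type
  | var : α → PropForm α
  | bot : PropForm α
  | and : PropForm α → PropForm α → PropForm α
  | or  : PropForm α → PropForm α → PropForm α
  | imp : PropForm α → PropForm α → PropForm α

/-- Instances of the fixed standard Hilbert-style axiom schemes for the
intuitionistic propositional calculus. -/
inductive IPCAx {α : Type} : PropForm α → Prop
  | imp1 (p q : PropForm α) : IPCAx (PropForm.imp p (PropForm.imp q p))
  | imp2 (p q r : PropForm α) : IPCAx
      (PropForm.imp (PropForm.imp p (PropForm.imp q r))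
        (PropForm.imp (PropForm.imp p q) (PropForm.imp p r)))
  | andE1 (p q : PropForm α) : IPCAx (PropForm.imp (PropForm.and p q) p)
  | andE2 (p q : PropForm α) : IPCAx (PropForm.imp (PropForm.and p q) q)
  | andI (p q : PropForm α) : IPCAx (PropForm.imp p (PropForm.imp q (PropForm.and p q)))
  | orI1 (p q : PropForm α) : IPCAx (PropForm.imp p (PropForm.or p q))
  | orI2 (p q : PropForm α) : IPCAx (PropForm.imp q (PropForm.or p q))
  | orE (p q r : PropForm α) : IPCAx
      (PropForm.imp (PropForm.imp p r)
        (PropForm.imp (PropForm.imp q r) (PropForm.imp (PropForm.or p q) r)))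
  | exfalso (p : PropForm α) : IPCAx (PropForm.imp PropForm.bot p)

/-- Theoremhood in the intuitionistic propositional calculus (Hilbert
style: the axiom schemes above with modus ponens as the only rule). -/
inductive IPCThm {α : Type} : PropForm α → Prop
  | ax {p : PropForm α} : IPCAx p → IPCThm p
  | mp {p q : PropForm α} : IPCThm (PropForm.imp p q) → IPCThm p → IPCThm q

/-- `Ḃ(t₁,…,tₙ)`: substitute the term `v i` for the variable `i` in `B`,
with each connective replaced by its dotted counterpart. -/
def PropForm.substT {α : Type} (v : α → Term) : PropForm α → Term
  | PropForm.var a => v a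
  | PropForm.bot => Term.bot
  | PropForm.and p q => Term.and (p.substT v) (q.substT v)
  | PropForm.or p q => Term.or (p.substT v) (q.substT v)
  | PropForm.imp p q => Term.imp (p.substT v) (q.substT v)

/-- `B(φ₁,…,φₙ)`: substitute the sentence `v i` for the variable `i` in `B`. -/
def PropForm.substS {α : Type} (v : α → Sentence) : PropForm α → Sentence
  | PropForm.var a => v a
  | PropForm.bot => Sentence.bot
  | PropForm.and p q => Sentence.and (p.substS v) (q.substS v)
  | PropForm.or p q => Sentence.or (p.substS v) (q.substS v)
  | PropForm.imp p q => Sentence.imp (p.substS v) (q.substS v)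

/-- The conjunction M[t₁] ∧ ⋯ ∧ M[tₙ] (for n ≥ 1, associated to the left). -/
def conjM : (n : ℕ) → (Fin (n + 1) → Term) → Sentence
  | 0, v => Sentence.M (v 0)
  | n + 1, v =>
      Sentence.and (conjM n (fun i => v i.castSucc))
        (Sentence.M (v (Fin.last (n + 1))))

section Helpers

variable {θ : ℕ → Sentence}

lemma eval_dot_s16 (φ : Sentence) : Term.eval θ φ.dot = φ := by
  induction φ <;> simp [Sentence.dot, Term.eval, *]

lemma thm_M_dot {φ : Sentence} (h : Grounded θ φ) : Thm θ (Sentence.M φ.dot) :=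
  Thm.ax1 (by rwa [eval_dot_s16])

/-- A convenient term whose M is always provable. -/
def u₀ : Term := Term.M Term.bot

lemma thm_M_u0 : Thm θ (Sentence.M u₀) := Thm.ax1 (Grounded.M _)

lemma thm_A_ax {s t u a : Term} (h : HilbertAxT s t u a)
    (hs : Thm θ (Sentence.M s)) (ht : Thm θ (Sentence.M t))
    (hu : Thm θ (Sentence.M u)) : Thm θ (Sentence.A a) :=
  Thm.mp (Thm.conj (Thm.conj hs ht) hu) (Thm.logical h)

lemma sImp1 {φ ψ : Sentence} (hφ : Grounded θ φ) (hψ : Grounded θ ψ) :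
    Thm θ (Sentence.imp φ (Sentence.imp ψ φ)) := by
  have := Thm.release (θ := θ)
    (thm_A_ax (HilbertAxT.imp1 φ.dot ψ.dot u₀)
      (thm_M_dot hφ) (thm_M_dot hψ) thm_M_u0)
  simpa [Term.eval, eval_dot_s16] using this

lemma sImp2 {φ ψ χ : Sentence} (hφ : Grounded θ φ) (hψ : Grounded θ ψ)
    (hχ : Grounded θ χ) :
    Thm θ (Sentence.imp (Sentence.imp φ (Sentence.imp ψ χ))
      (Sentence.imp (Sentence.imp φ ψ) (Sentence.imp φ χ))) := by
  have := Thm.release (θ := θ)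
    (thm_A_ax (HilbertAxT.imp2 φ.dot ψ.dot χ.dot)
      (thm_M_dot hφ) (thm_M_dot hψ) (thm_M_dot hχ))
  simpa [Term.eval, eval_dot_s16] using this

lemma sAndE1 {φ ψ : Sentence} (hφ : Grounded θ φ) (hψ : Grounded θ ψ) :
    Thm θ (Sentence.imp (Sentence.and φ ψ) φ) := by
  have := Thm.release (θ := θ)
    (thm_A_ax (HilbertAxT.andE1 φ.dot ψ.dot u₀)
      (thm_M_dot hφ) (thm_M_dot hψ) thm_M_u0)
  simpa [Term.eval, eval_dot_s16] using this

lemma sAndE2 {φ ψ : Sentence} (hφ : Grounded θ φ) (hψ : Grounded θ ψ) :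
    Thm θ (Sentence.imp (Sentence.and φ ψ) ψ) := by
  have := Thm.release (θ := θ)
    (thm_A_ax (HilbertAxT.andE2 φ.dot ψ.dot u₀)
      (thm_M_dot hφ) (thm_M_dot hψ) thm_M_u0)
  simpa [Term.eval, eval_dot_s16] using this

lemma sAndI {φ ψ : Sentence} (hφ : Grounded θ φ) (hψ : Grounded θ ψ) :
    Thm θ (Sentence.imp φ (Sentence.imp ψ (Sentence.and φ ψ))) := by
  have := Thm.release (θ := θ)
    (thm_A_ax (HilbertAxT.andI φ.dot ψ.dot u₀)
      (thm_M_dot hφ) (thm_M_dot hψ) thm_M_u0)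
  simpa [Term.eval, eval_dot_s16] using this

lemma der_of_thm {C φ : Sentence} (hC : Grounded θ C) (hφ : Grounded θ φ)
    (h : Thm θ φ) : Thm θ (Sentence.imp C φ) :=
  Thm.mp h (sImp1 hφ hC)

lemma der_mp {C φ ψ : Sentence} (hC : Grounded θ C) (hφ : Grounded θ φ)
    (hψ : Grounded θ ψ) (h1 : Thm θ (Sentence.imp C (Sentence.imp φ ψ)))
    (h2 : Thm θ (Sentence.imp C φ)) : Thm θ (Sentence.imp C ψ) :=
  Thm.mp h2 (Thm.mp h1 (sImp2 hC hφ hψ))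

lemma s_comp {C φ ψ : Sentence} (hC : Grounded θ C) (hφ : Grounded θ φ)
    (hψ : Grounded θ ψ) (h1 : Thm θ (Sentence.imp C φ))
    (h2 : Thm θ (Sentence.imp φ ψ)) : Thm θ (Sentence.imp C ψ) :=
  der_mp hC hφ hψ (der_of_thm hC (Grounded.imp hφ hψ) h2) h1

lemma sId {φ : Sentence} (hφ : Grounded θ φ) : Thm θ (Sentence.imp φ φ) :=
  Thm.mp (sImp1 hφ hφ)
    (Thm.mp (sImp1 hφ (Grounded.imp hφ hφ))
      (sImp2 hφ (Grounded.imp hφ hφ) hφ))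

lemma der_and {C φ ψ : Sentence} (hC : Grounded θ C) (hφ : Grounded θ φ)
    (hψ : Grounded θ ψ) (h1 : Thm θ (Sentence.imp C φ))
    (h2 : Thm θ (Sentence.imp C ψ)) :
    Thm θ (Sentence.imp C (Sentence.and φ ψ)) :=
  der_mp hC hψ (Grounded.and hφ hψ)
    (der_mp hC hφ (Grounded.imp hψ (Grounded.and hφ hψ))
      (der_of_thm hC
        (Grounded.imp hφ (Grounded.imp hψ (Grounded.and hφ hψ)))
        (sAndI hφ hψ)) h1) h2

lemma grounded_conjM : ∀ (n : ℕ) (v : Fin (n + 1) → Term),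
    Grounded θ (conjM n v)
  | 0, v => Grounded.M _
  | n + 1, v => Grounded.and (grounded_conjM n _) (Grounded.M _)

lemma derC_M : ∀ (n : ℕ) (v : Fin (n + 1) → Term) (i : Fin (n + 1)),
    Thm θ (Sentence.imp (conjM n v) (Sentence.M (v i)))
  | 0, v, i => by
      have : i = 0 := Fin.ext (by omega)
      subst this
      exact sId (Grounded.M _)
  | n + 1, v, i => by
      induction i using Fin.lastCases with
      | last =>
          exact sAndE2 (grounded_conjM n _) (Grounded.M _)
      | cast j =>
          exact s_comp (grounded_conjM (n + 1) v) (grounded_conjM n _)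
            (Grounded.M _)
            (sAndE1 (grounded_conjM n _) (Grounded.M _))
            (derC_M n (fun i => v i.castSucc) j)

lemma iff_fwd {φ ψ : Sentence} (hφ : Grounded θ φ) (hψ : Grounded θ ψ)
    (h : Thm θ (Sentence.iff φ ψ)) : Thm θ (Sentence.imp φ ψ) :=
  Thm.mp h (sAndE1 (Grounded.imp hφ hψ) (Grounded.imp hψ hφ))

lemma derC_Msub {n : ℕ} {v : Fin (n + 1) → Term} :
    ∀ q : PropForm (Fin (n + 1)),
      Thm θ (Sentence.imp (conjM n v) (Sentence.M (q.substT v)))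
  | PropForm.var i => derC_M n v i
  | PropForm.bot =>
      der_of_thm (grounded_conjM n v) (Grounded.M _)
        (Thm.ax1 (by exact Grounded.bot))
  | PropForm.and p q =>
      s_comp (grounded_conjM n v)
        (Grounded.and (Grounded.M _) (Grounded.M _)) (Grounded.M _)
        (der_and (grounded_conjM n v) (Grounded.M _) (Grounded.M _)
          (derC_Msub p) (derC_Msub q))
        (iff_fwd (Grounded.and (Grounded.M _) (Grounded.M _)) (Grounded.M _)
          (Thm.ax2and _ _))
  | PropForm.or p q =>
      s_comp (grounded_conjM n v)
        (Grounded.and (Grounded.M _) (Grounded.M _)) (Grounded.M _)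
        (der_and (grounded_conjM n v) (Grounded.M _) (Grounded.M _)
          (derC_Msub p) (derC_Msub q))
        (iff_fwd (Grounded.and (Grounded.M _) (Grounded.M _)) (Grounded.M _)
          (Thm.ax2or _ _))
  | PropForm.imp p q =>
      s_comp (grounded_conjM n v)
        (Grounded.and (Grounded.M _) (Grounded.M _)) (Grounded.M _)
        (der_and (grounded_conjM n v) (Grounded.M _) (Grounded.M _)
          (derC_Msub p) (derC_Msub q))
        (iff_fwd (Grounded.and (Grounded.M _) (Grounded.M _)) (Grounded.M _)
          (Thm.ax2imp _ _))

lemma der_A_of_ax {C : Sentence} {s t u a : Term} (hC : Grounded θ C)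
    (h : HilbertAxT s t u a)
    (hs : Thm θ (Sentence.imp C (Sentence.M s)))
    (ht : Thm θ (Sentence.imp C (Sentence.M t)))
    (hu : Thm θ (Sentence.imp C (Sentence.M u))) :
    Thm θ (Sentence.imp C (Sentence.A a)) :=
  s_comp hC
    (Grounded.and (Grounded.and (Grounded.M _) (Grounded.M _)) (Grounded.M _))
    (Grounded.A _)
    (der_and hC (Grounded.and (Grounded.M _) (Grounded.M _)) (Grounded.M _)
      (der_and hC (Grounded.M _) (Grounded.M _) hs ht) hu)
    (Thm.logical h)

end Helpers

theorem atm_subjunctive_reasoning (θ : ℕ → Sentence)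
    (h1 : θ 1 = liar1) (h2 : θ 2 = liar2) :
    ∀ (n : ℕ) (v : Fin (n + 1) → Term) (B : PropForm (Fin (n + 1))),
      IPCThm B →
      Thm θ (Sentence.imp (conjM n v) (Sentence.A (B.substT v))) := by
  intro n v B hB
  have hC : Grounded θ (conjM n v) := grounded_conjM n v
  have hu : Thm θ (Sentence.imp (conjM n v) (Sentence.M u₀)) :=
    der_of_thm hC (Grounded.M _) thm_M_u0
  induction hB with
  | ax hp =>
      cases hp with
      | imp1 p q =>
          exact der_A_of_ax hC (HilbertAxT.imp1 _ _ u₀)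
            (derC_Msub p) (derC_Msub q) hu
      | imp2 p q r =>
          exact der_A_of_ax hC (HilbertAxT.imp2 _ _ _)
            (derC_Msub p) (derC_Msub q) (derC_Msub r)
      | andE1 p q =>
          exact der_A_of_ax hC (HilbertAxT.andE1 _ _ u₀)
            (derC_Msub p) (derC_Msub q) hu
      | andE2 p q =>
          exact der_A_of_ax hC (HilbertAxT.andE2 _ _ u₀)
            (derC_Msub p) (derC_Msub q) hu
      | andI p q =>
          exact der_A_of_ax hC (HilbertAxT.andI _ _ u₀)
            (derC_Msub p) (derC_Msub q) hu
      | orI1 p q =>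
          exact der_A_of_ax hC (HilbertAxT.orI1 _ _ u₀)
            (derC_Msub p) (derC_Msub q) hu
      | orI2 p q =>
          exact der_A_of_ax hC (HilbertAxT.orI2 _ _ u₀)
            (derC_Msub p) (derC_Msub q) hu
      | orE p q r =>
          exact der_A_of_ax hC (HilbertAxT.orE _ _ _)
            (derC_Msub p) (derC_Msub q) (derC_Msub r)
      | exfalso p =>
          exact der_A_of_ax hC (HilbertAxT.exfalso _ u₀ u₀)
            (derC_Msub p) hu hu
  | mp hpq hp ih1 ih2 =>
      exact s_comp hC (Grounded.and (Grounded.A _) (Grounded.A _))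
        (Grounded.A _)
        (der_and hC (Grounded.A _) (Grounded.A _) ih2 ih1)
        (Thm.ax5 _ _)

end ATM
end
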